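/- Let p, q be patterns with lbs(p) ∩ lbs(q) = ∅. Then for every pattern r: p ⊕ q ∼ r if and only if p ∼ q ⋈ r, where p ⊕ q is the pattern (p \ {Z_p}) ∪ (q \ {Z_q}) ∪ {Z_p ∪ Z_q} and Z_p, Z_q are the zero-sets of p and q. -/

import Mathlib

open Finset
open scoped Classical

namespace PatternST

variable {α : Type*} [DecidableEq α]

/-- `p` is a pattern over ground set `U` with zero element `z`:
a family of subsets of `U ∪ {z}` with exactly one member containing `z`. -/
def IsPattern (z : α) (U : Finset α) (p : Finset (Finset α)) : Prop :=
  (∀ S ∈ p, S ⊆ insert z U) ∧ ∃! S, S ∈ p ∧ z ∈ S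

/-- Two sets are linked if one belongs to `p`, the other to `q`, and they intersect. -/
def linkRel (p q : Finset (Finset α)) (S T : Finset α) : Prop :=
  ((S ∈ p ∧ T ∈ q) ∨ (S ∈ q ∧ T ∈ p)) ∧ (S ∩ T).Nonempty

/-- Reflexive-transitive (and, by symmetry of `linkRel`, symmetric) closure. -/
def conn (p q : Finset (Finset α)) : Finset α → Finset α → Prop :=
  Relation.ReflTransGen (linkRel p q)

/-- The join `p ⋈ q`: unions of the equivalence classes of `conn` on `p ∪ q`. -/
noncomputable def pjoin (p q : Finset (Finset α)) : Finset (Finset α) :=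
  (p ∪ q).image fun S => ((p ∪ q).filter fun T => conn p q S T).sup id

/-- `p` and `q` are consistent if `p ⋈ q` consists of a single set. -/
def consistent (p q : Finset (Finset α)) : Prop := (pjoin p q).card = 1

/-- The labels (elements of `U`, i.e. everything except `z`) occurring in `p`. -/
def lbs (z : α) (p : Finset (Finset α)) : Finset α := (p.sup id).erase z

/-- The labels appearing as singletons in `p`. -/
def sing (z : α) (p : Finset (Finset α)) : Finset α :=
  (lbs z p).filter fun u => ({u} : Finset α) ∈ p

/-- A pattern is complete if every occurring label occurs as a singleton. -/
def Complete (z : α) (p : Finset (Finset α)) : Prop := lbs z p = sing z p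

/-!
Both sides say that a bipartite intersection graph is connected: on `p ⊕ q` against `r`, and
on `p` against `q ⋈ r`, two sets being linked when they meet. Label-disjointness
means that a set of `p` meets a set of `q` only in `z`, hence only `Z_p` meets `Z_q`; so
merging `Z_p` with `Z_q` and routing the sets of `p` through the components of `q ∪ r`
produce the same connections. A path of the first graph is pushed forward by sending every
set of `q` or `r` to its component, and a path of the second graph is pulled back by
replacing a component by any of its members. The pull-back is well defined up to
connectivity because two components of a join with the same union coincide (a set meeting
both ends of a link at a common point is linked to one of them).
-/

theorem _root_.Relation.ReflTransGen.lift_rel {β γ : Type*} {r : β → β → Prop}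
    {s : γ → γ → Prop} {R : β → γ → Prop}
    (hR : ∀ a a₁ a₂, R a a₁ → R a a₂ → Relation.ReflTransGen s a₁ a₂)
    (hr : ∀ a b, r a b → ∃ a' b', R a a' ∧ R b b' ∧ Relation.ReflTransGen s a' b')
    {a b : β} (hab : Relation.ReflTransGen r a b) {a' b' : γ} (ha : R a a') (hb : R b b') :
    Relation.ReflTransGen s a' b' := by
  induction hab generalizing b' with
  | refl => exact hR a a' b' ha hb
  | tail _ hbc ih =>
    obtain ⟨b₀, c₀, hb₀, hc₀, h⟩ := hr _ _ hbc
    exact (ih hb₀).trans (h.trans (hR _ _ _ hc₀ hb))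

section Join

variable {p q r : Finset (Finset α)} {S T X Y B K : Finset α} {x : α}

theorem linkRel_of_mem (hS : S ∈ p) (hT : T ∈ q) (hxS : x ∈ S) (hxT : x ∈ T) :
    linkRel p q S T :=
  ⟨.inl ⟨hS, hT⟩, x, mem_inter.2 ⟨hxS, hxT⟩⟩

theorem linkRel_symm (h : linkRel p q S T) : linkRel p q T S :=
  ⟨h.1.symm.imp (fun h => ⟨h.2, h.1⟩) (fun h => ⟨h.2, h.1⟩), inter_comm S T ▸ h.2⟩

theorem mem_union_of_linkRel (h : linkRel p q S T) : S ∈ p ∪ q :=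
  h.1.elim (fun h => mem_union_left _ h.1) (fun h => mem_union_right _ h.1)

theorem not_linkRel_empty : ¬ linkRel p q ∅ T := fun h => by simpa using h.2

theorem conn_symm (h : conn p q S T) : conn p q T S := by
  induction h with
  | refl => exact .refl
  | tail _ hl ih => exact ih.head (linkRel_symm hl)

theorem linkRel_or_linkRel (h : linkRel p q S Y) (hB : B ∈ p ∪ q) (hxS : x ∈ S)
    (hxY : x ∈ Y) (hxB : x ∈ B) : linkRel p q S B ∨ linkRel p q Y B := by
  rcases h.1 with ⟨hS, hY⟩ | ⟨hS, hY⟩ <;> rcases mem_union.1 hB with hB | hB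
  · exact .inr (linkRel_symm (linkRel_of_mem hB hY hxB hxY))
  · exact .inl (linkRel_of_mem hS hB hxS hxB)
  · exact .inl (linkRel_symm (linkRel_of_mem hB hS hxB hxS))
  · exact .inr (linkRel_of_mem hY hB hxY hxB)

noncomputable def joinSet (p q : Finset (Finset α)) (S : Finset α) : Finset α :=
  ((p ∪ q).filter fun T => conn p q S T).sup id

theorem mem_pjoin : K ∈ pjoin p q ↔ ∃ S ∈ p ∪ q, joinSet p q S = K := mem_image

theorem joinSet_mem_pjoin (hS : S ∈ p ∪ q) : joinSet p q S ∈ pjoin p q :=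
  mem_image_of_mem _ hS

theorem mem_joinSet : x ∈ joinSet p q S ↔ ∃ T ∈ p ∪ q, conn p q S T ∧ x ∈ T := by
  simp [joinSet, mem_sup, and_assoc]

theorem subset_joinSet (hS : S ∈ p ∪ q) : S ⊆ joinSet p q S :=
  fun _ hx => mem_joinSet.2 ⟨S, hS, .refl, hx⟩

theorem joinSet_eq_of_conn (h : conn p q S T) : joinSet p q S = joinSet p q T := by
  ext x
  simp only [mem_joinSet]
  exact ⟨fun ⟨Y, hY, hSY, hx⟩ => ⟨Y, hY, (conn_symm h).trans hSY, hx⟩,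
    fun ⟨Y, hY, hTY, hx⟩ => ⟨Y, hY, h.trans hTY, hx⟩⟩

theorem joinSet_of_isolated (hS : S ∈ p ∪ q) (h : ∀ T, ¬ linkRel p q S T) :
    joinSet p q S = S := by
  ext x
  simpa [mem_joinSet, conn, Relation.reflTransGen_iff_eq h] using fun _ => mem_union.1 hS

theorem conn_of_linkRel_of_joinSet_subset (hl : linkRel p q S Y)
    (h : joinSet p q S ⊆ joinSet p q T) : conn p q S T := by
  obtain ⟨x, hx⟩ := hl.2
  rw [mem_inter] at hx
  obtain ⟨B, hB, hTB, hxB⟩ := mem_joinSet.1 (h (subset_joinSet (mem_union_of_linkRel hl) hx.1))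
  have hSB : conn p q S B := (linkRel_or_linkRel hl hB hx.1 hx.2 hxB).elim
    .single (fun hYB => (Relation.ReflTransGen.single hl).tail hYB)
  exact hSB.trans (conn_symm hTB)

theorem conn_of_joinSet_eq (hS : S ∈ p ∪ q) (hT : T ∈ p ∪ q)
    (h : joinSet p q S = joinSet p q T) : conn p q S T := by
  by_cases hSl : ∃ Y, linkRel p q S Y
  · obtain ⟨Y, hY⟩ := hSl
    exact conn_of_linkRel_of_joinSet_subset hY h.le
  by_cases hTl : ∃ Y, linkRel p q T Y
  · obtain ⟨Y, hY⟩ := hTl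
    exact conn_symm (conn_of_linkRel_of_joinSet_subset hY h.ge)
  simp only [not_exists] at hSl hTl
  rw [joinSet_of_isolated hS hSl, joinSet_of_isolated hT hTl] at h
  exact h ▸ .refl

theorem consistent_iff_forall_conn (hS : S ∈ p ∪ q) :
    consistent p q ↔ ∀ T ∈ p ∪ q, conn p q S T := by
  rw [consistent, card_eq_one]
  constructor
  · rintro ⟨K, hK⟩ T hT
    have hSK := joinSet_mem_pjoin hS
    have hTK := joinSet_mem_pjoin hT
    rw [hK, mem_singleton] at hSK hTK
    exact conn_of_joinSet_eq hS hT (hSK.trans hTK.symm)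
  · refine fun h => ⟨joinSet p q S, ext fun K => ?_⟩
    rw [mem_pjoin, mem_singleton]
    exact ⟨fun ⟨T, _, hTK⟩ => hTK ▸ (joinSet_eq_of_conn (h T ‹_›)).symm,
      fun hK => ⟨S, hS, hK.symm⟩⟩

theorem linkRel_pjoin (hX : X ∈ p) (hY : Y ∈ q ∪ r) (hxX : x ∈ X) (hxY : x ∈ Y) :
    linkRel p (pjoin q r) X (joinSet q r Y) :=
  linkRel_of_mem hX (joinSet_mem_pjoin hY) hxX (subset_joinSet hY hxY)

theorem conn_joinSet_of_mem (hXp : X ∈ p) (hX : X ∈ q ∪ r) :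
    conn p (pjoin q r) X (joinSet q r X) := by
  obtain rfl | ⟨x, hx⟩ := X.eq_empty_or_nonempty
  · rw [joinSet_of_isolated hX fun _ => not_linkRel_empty]
    exact .refl
  · exact .single (linkRel_pjoin hXp hX hx hx)

end Join

section Union

variable {z : α} {U : Finset α} {p q r : Finset (Finset α)} {Zp Zq S T X Y K B : Finset α}
  {x : α}

theorem IsPattern.eq_of_mem (hp : IsPattern z U p) (hZp : Zp ∈ p) (hzp : z ∈ Zp) (hS : S ∈ p)
    (hzS : z ∈ S) : S = Zp :=
  hp.2.unique ⟨hS, hzS⟩ ⟨hZp, hzp⟩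

theorem eq_of_lbs_inter_eq_empty (h : lbs z p ∩ lbs z q = ∅) (hX : X ∈ p) (hY : Y ∈ q)
    (hxX : x ∈ X) (hxY : x ∈ Y) : x = z := by
  by_contra hxz
  have : x ∈ lbs z p ∩ lbs z q := by
    simp only [lbs, mem_inter, mem_erase, mem_sup, id]
    exact ⟨⟨hxz, X, hX, hxX⟩, hxz, Y, hY, hxY⟩
  simp [h] at this

/-- The paper's `p ⊕ q`. -/
def punion (p q : Finset (Finset α)) (Zp Zq : Finset α) : Finset (Finset α) :=
  insert (Zp ∪ Zq) (p.erase Zp ∪ q.erase Zq)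

theorem union_mem_punion : Zp ∪ Zq ∈ punion p q Zp Zq := mem_insert_self _ _

noncomputable def toJoin (p q r : Finset (Finset α)) (Zp Zq X : Finset α) : Finset α :=
  if X ∈ p then X else if X = Zp ∪ Zq then Zp else joinSet q r X

theorem conn_toJoin_joinSet (hZp : Zp ∈ p) (hzp : z ∈ Zp) (hX : X ∈ q ∪ r) :
    conn p (pjoin q r) (toJoin p q r Zp Zq X) (joinSet q r X) := by
  unfold toJoin
  split_ifs with hXp hXZ
  · exact conn_joinSet_of_mem hXp hX
  · exact .single (linkRel_pjoin hZp hX hzp (hXZ ▸ mem_union_left _ hzp))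
  · exact .refl

theorem conn_toJoin_joinSet_of_mem (hZp : Zp ∈ p) (hzp : z ∈ Zp) (hZq : Zq ∈ q)
    (hzq : z ∈ Zq) (hX : X ∈ punion p q Zp Zq) (hY : Y ∈ r) (hxX : x ∈ X)
    (hxY : x ∈ Y) :
    conn p (pjoin q r) (toJoin p q r Zp Zq X) (joinSet q r Y) := by
  have hYqr : Y ∈ q ∪ r := mem_union_right _ hY
  unfold toJoin
  split_ifs with hXp hXZ
  · exact .single (linkRel_pjoin hXp hYqr hxX hxY)
  · rcases mem_union.1 (hXZ ▸ hxX) with hxZp | hxZq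
    · exact .single (linkRel_pjoin hZp hYqr hxZp hxY)
    · rw [← joinSet_eq_of_conn (.single (linkRel_of_mem hZq hY hxZq hxY))]
      exact .single (linkRel_pjoin hZp (mem_union_left _ hZq) hzp hzq)
  · have hXq : X ∈ q := by
      simp only [punion, mem_insert, mem_union, mem_erase] at hX
      tauto
    exact joinSet_eq_of_conn (.single (linkRel_of_mem hXq hY hxX hxY)) ▸ .refl

theorem conn_toJoin_of_linkRel (hZp : Zp ∈ p) (hzp : z ∈ Zp) (hZq : Zq ∈ q) (hzq : z ∈ Zq)
    (h : linkRel (punion p q Zp Zq) r X Y) :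
    conn p (pjoin q r) (toJoin p q r Zp Zq X) (toJoin p q r Zp Zq Y) := by
  have key : ∀ {X Y x}, X ∈ punion p q Zp Zq → Y ∈ r → x ∈ X → x ∈ Y →
      conn p (pjoin q r) (toJoin p q r Zp Zq X) (toJoin p q r Zp Zq Y) :=
    fun hX hY hxX hxY => (conn_toJoin_joinSet_of_mem hZp hzp hZq hzq hX hY hxX hxY).trans
      (conn_symm (conn_toJoin_joinSet hZp hzp (mem_union_right _ hY)))
  obtain ⟨x, hx⟩ := h.2
  rw [mem_inter] at hx
  rcases h.1 with ⟨hX, hY⟩ | ⟨hX, hY⟩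
  · exact key hX hY hx.1 hx.2
  · exact conn_symm (key hY hX hx.2 hx.1)

theorem consistent_pjoin_of_consistent_punion (hp : IsPattern z U p) (hZp : Zp ∈ p)
    (hzp : z ∈ Zp) (hZq : Zq ∈ q) (hzq : z ∈ Zq) (h : consistent (punion p q Zp Zq) r) :
    consistent p (pjoin q r) := by
  have hbase : toJoin p q r Zp Zq (Zp ∪ Zq) = Zp := by
    by_cases hZ : Zp ∪ Zq ∈ p
    · rw [toJoin, if_pos hZ]
      exact hp.eq_of_mem hZp hzp hZ (mem_union_left _ hzp)
    · rw [toJoin, if_neg hZ, if_pos rfl]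
  have hpath : ∀ X ∈ punion p q Zp Zq ∪ r, conn p (pjoin q r) Zp (toJoin p q r Zp Zq X) :=
    fun X hX => by
      have := Relation.ReflTransGen.lift' (toJoin p q r Zp Zq)
        (fun _ _ hl => conn_toJoin_of_linkRel hZp hzp hZq hzq hl) _ _
        ((consistent_iff_forall_conn (mem_union_left _ union_mem_punion)).1 h X hX)
      rwa [Function.onFun, hbase] at this
  rw [consistent_iff_forall_conn (mem_union_left _ hZp)]
  intro K hK
  rcases mem_union.1 hK with hKp | hKJ
  · by_cases hKZ : K = Zp
    · exact hKZ ▸ .refl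
    · have hKA : K ∈ punion p q Zp Zq :=
        mem_insert_of_mem (mem_union_left _ (mem_erase.2 ⟨hKZ, hKp⟩))
      have := hpath K (mem_union_left _ hKA)
      rwa [toJoin, if_pos hKp] at this
  · obtain ⟨B, hB, rfl⟩ := mem_pjoin.1 hKJ
    by_cases hBZ : B = Zq
    · exact hBZ ▸ .single (linkRel_pjoin hZp (mem_union_left _ hZq) hzp hzq)
    · have hB' : B ∈ punion p q Zp Zq ∪ r := by
        simp only [punion, mem_union, mem_insert, mem_erase] at hB ⊢
        tauto
      exact (hpath B hB').trans (conn_toJoin_joinSet hZp hzp hB)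

def merge (Zp Zq X : Finset α) : Finset α := if X = Zp ∨ X = Zq then Zp ∪ Zq else X

/-- `T` is a set of `(p ⊕ q) ∪ r` standing for the set `K` of `p ∪ (q ⋈ r)`. -/
def MergeRel (p q r : Finset (Finset α)) (Zp Zq K T : Finset α) : Prop :=
  (K ∈ p ∧ T = merge Zp Zq K) ∨ ∃ B ∈ q ∪ r, K = joinSet q r B ∧ T = merge Zp Zq B

theorem subset_merge : X ⊆ merge Zp Zq X := by
  unfold merge
  split_ifs with h
  · rcases h with rfl | rfl
    exacts [subset_union_left, subset_union_right]
  · exact subset_rfl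

theorem merge_mem_punion (hX : X ∈ p ∪ q) : merge Zp Zq X ∈ punion p q Zp Zq := by
  unfold merge punion
  split_ifs with h
  · exact union_mem_punion
  · simp only [mem_union, mem_insert, mem_erase] at hX ⊢
    tauto

theorem merge_of_not_mem (hzp : z ∈ Zp) (hzq : z ∈ Zq) (hX : z ∉ X) : merge Zp Zq X = X :=
  if_neg (by rintro (rfl | rfl) <;> contradiction)

theorem conn_merge_of_mem_right (hzp : z ∈ Zp) (hzq : z ∈ Zq) (hT : T ∈ r) :
    conn (punion p q Zp Zq) r T (merge Zp Zq T) := by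
  unfold merge
  split_ifs with h
  · have hzT : z ∈ T := by rcases h with rfl | rfl <;> assumption
    exact .single (linkRel_symm (linkRel_of_mem union_mem_punion hT (mem_union_left _ hzp) hzT))
  · exact .refl

theorem conn_merge_of_linkRel (hzp : z ∈ Zp) (hzq : z ∈ Zq) (h : linkRel q r S T) :
    conn (punion p q Zp Zq) r (merge Zp Zq S) (merge Zp Zq T) := by
  have key : ∀ {S T x}, S ∈ q → T ∈ r → x ∈ S → x ∈ T →
      conn (punion p q Zp Zq) r (merge Zp Zq S) (merge Zp Zq T) :=
    fun hS hT hxS hxT => (Relation.ReflTransGen.single (linkRel_of_mem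
      (merge_mem_punion (mem_union_right _ hS)) hT (subset_merge hxS) hxT)).trans
      (conn_merge_of_mem_right hzp hzq hT)
  obtain ⟨x, hx⟩ := h.2
  rw [mem_inter] at hx
  rcases h.1 with ⟨hS, hT⟩ | ⟨hS, hT⟩
  · exact key hS hT hx.1 hx.2
  · exact conn_symm (key hT hS hx.2 hx.1)

theorem conn_merge_of_conn (hzp : z ∈ Zp) (hzq : z ∈ Zq) (h : conn q r S T) :
    conn (punion p q Zp Zq) r (merge Zp Zq S) (merge Zp Zq T) :=
  Relation.ReflTransGen.lift' (merge Zp Zq) (fun _ _ hl => conn_merge_of_linkRel hzp hzq hl) _ _ h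

theorem conn_merge_of_mem_of_mem (hp : IsPattern z U p) (hq : IsPattern z U q) (hZp : Zp ∈ p)
    (hzp : z ∈ Zp) (hZq : Zq ∈ q) (hzq : z ∈ Zq) (hdisj : lbs z p ∩ lbs z q = ∅)
    (hK : K ∈ p) (hB : B ∈ q ∪ r) (hxK : x ∈ K) (hxB : x ∈ B) :
    conn (punion p q Zp Zq) r (merge Zp Zq K) (merge Zp Zq B) := by
  rcases mem_union.1 hB with hBq | hBr
  · obtain rfl := eq_of_lbs_inter_eq_empty hdisj hK hBq hxK hxB
    rw [hp.eq_of_mem hZp hzp hK hxK, hq.eq_of_mem hZq hzq hBq hxB]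
    simp only [merge, true_or, or_true, if_true]
    exact .refl
  · exact (Relation.ReflTransGen.single (linkRel_of_mem (merge_mem_punion (mem_union_left _ hK))
      hBr (subset_merge hxK) hxB)).trans (conn_merge_of_mem_right hzp hzq hBr)

theorem conn_merge_of_eq_joinSet (hp : IsPattern z U p) (hq : IsPattern z U q) (hZp : Zp ∈ p)
    (hzp : z ∈ Zp) (hZq : Zq ∈ q) (hzq : z ∈ Zq) (hdisj : lbs z p ∩ lbs z q = ∅)
    (hK : K ∈ p) (hB : B ∈ q ∪ r) (hKB : K = joinSet q r B) :
    conn (punion p q Zp Zq) r (merge Zp Zq K) (merge Zp Zq B) := by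
  obtain rfl | ⟨x, hx⟩ := B.eq_empty_or_nonempty
  · rw [hKB, joinSet_of_isolated hB fun _ => not_linkRel_empty]
    exact .refl
  · exact conn_merge_of_mem_of_mem hp hq hZp hzp hZq hzq hdisj hK hB
      (hKB ▸ subset_joinSet hB hx) hx

theorem conn_of_mergeRel (hp : IsPattern z U p) (hq : IsPattern z U q) (hZp : Zp ∈ p)
    (hzp : z ∈ Zp) (hZq : Zq ∈ q) (hzq : z ∈ Zq) (hdisj : lbs z p ∩ lbs z q = ∅)
    (h₁ : MergeRel p q r Zp Zq K S) (h₂ : MergeRel p q r Zp Zq K T) :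
    conn (punion p q Zp Zq) r S T := by
  rcases h₁ with ⟨hK, rfl⟩ | ⟨B₁, hB₁, rfl, rfl⟩ <;>
    rcases h₂ with ⟨hK', rfl⟩ | ⟨B₂, hB₂, hK₂, rfl⟩
  · exact .refl
  · exact conn_merge_of_eq_joinSet hp hq hZp hzp hZq hzq hdisj hK hB₂ hK₂
  · exact conn_symm (conn_merge_of_eq_joinSet hp hq hZp hzp hZq hzq hdisj hK' hB₁ rfl)
  · exact conn_merge_of_conn hzp hzq (conn_of_joinSet_eq hB₁ hB₂ hK₂)

theorem exists_mergeRel_of_linkRel (hp : IsPattern z U p) (hq : IsPattern z U q)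
    (hZp : Zp ∈ p) (hzp : z ∈ Zp) (hZq : Zq ∈ q) (hzq : z ∈ Zq)
    (hdisj : lbs z p ∩ lbs z q = ∅) (h : linkRel p (pjoin q r) K T) :
    ∃ K' T', MergeRel p q r Zp Zq K K' ∧ MergeRel p q r Zp Zq T T' ∧
      conn (punion p q Zp Zq) r K' T' := by
  have key : ∀ {K L x}, K ∈ p → L ∈ pjoin q r → x ∈ K → x ∈ L →
      ∃ K' L', MergeRel p q r Zp Zq K K' ∧ MergeRel p q r Zp Zq L L' ∧
        conn (punion p q Zp Zq) r K' L' := by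
    intro K L x hK hL hxK hxL
    obtain ⟨B, -, rfl⟩ := mem_pjoin.1 hL
    obtain ⟨S, hS, hBS, hxS⟩ := mem_joinSet.1 hxL
    exact ⟨_, _, .inl ⟨hK, rfl⟩, .inr ⟨S, hS, joinSet_eq_of_conn hBS, rfl⟩,
      conn_merge_of_mem_of_mem hp hq hZp hzp hZq hzq hdisj hK hS hxK hxS⟩
  obtain ⟨x, hx⟩ := h.2
  rw [mem_inter] at hx
  rcases h.1 with ⟨hK, hT⟩ | ⟨hK, hT⟩
  · exact key hK hT hx.1 hx.2
  · obtain ⟨T', K', hT', hK', hc⟩ := key hT hK hx.2 hx.1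
    exact ⟨K', T', hK', hT', conn_symm hc⟩

theorem consistent_punion_of_consistent_pjoin (hp : IsPattern z U p) (hq : IsPattern z U q)
    (hZp : Zp ∈ p) (hzp : z ∈ Zp) (hZq : Zq ∈ q) (hzq : z ∈ Zq)
    (hdisj : lbs z p ∩ lbs z q = ∅) (h : consistent p (pjoin q r)) :
    consistent (punion p q Zp Zq) r := by
  have hpath : ∀ K T, K ∈ p ∪ pjoin q r → MergeRel p q r Zp Zq K T →
      conn (punion p q Zp Zq) r (Zp ∪ Zq) T := fun K T hK hKT =>
    Relation.ReflTransGen.lift_rel (r := linkRel p (pjoin q r)) (R := MergeRel p q r Zp Zq)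
      (fun _ _ _ h₁ h₂ => conn_of_mergeRel hp hq hZp hzp hZq hzq hdisj h₁ h₂)
      (fun _ _ hl => exists_mergeRel_of_linkRel hp hq hZp hzp hZq hzq hdisj hl)
      ((consistent_iff_forall_conn (mem_union_left _ hZp)).1 h K hK)
      (.inl ⟨hZp, (if_pos (.inl rfl)).symm⟩) hKT
  rw [consistent_iff_forall_conn (mem_union_left _ union_mem_punion)]
  intro X hX
  rcases mem_union.1 hX with hXA | hXr
  · rcases mem_insert.1 hXA with rfl | hX'
    · exact .refl
    rcases mem_union.1 hX' with hXp | hXq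
    · obtain ⟨hXZ, hX⟩ := mem_erase.1 hXp
      have hmerge := merge_of_not_mem hzp hzq fun hz => hXZ (hp.eq_of_mem hZp hzp hX hz)
      exact hpath X X (mem_union_left _ hX) (.inl ⟨hX, hmerge.symm⟩)
    · obtain ⟨hXZ, hX⟩ := mem_erase.1 hXq
      have hmerge := merge_of_not_mem hzp hzq fun hz => hXZ (hq.eq_of_mem hZq hzq hX hz)
      have hXqr : X ∈ q ∪ r := mem_union_left _ hX
      exact hpath _ X (mem_union_right _ (joinSet_mem_pjoin hXqr))
        (.inr ⟨X, hXqr, rfl, hmerge.symm⟩)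
  · have hXqr : X ∈ q ∪ r := mem_union_right _ hXr
    exact (hpath _ _ (mem_union_right _ (joinSet_mem_pjoin hXqr))
      (.inr ⟨X, hXqr, rfl, rfl⟩)).trans (conn_symm (conn_merge_of_mem_right hzp hzq hXr))

end Union

/-- For label-disjoint patterns `p, q`: `p ⊕ q ∼ r` iff `p ∼ q ⋈ r`. -/
theorem disjoint_union_consistent_iff_join (z : α) (U : Finset α)
    (p q : Finset (Finset α)) (hp : IsPattern z U p) (hq : IsPattern z U q)
    (Zp Zq : Finset α) (hZp : Zp ∈ p) (hzp : z ∈ Zp) (hZq : Zq ∈ q) (hzq : z ∈ Zq)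
    (hdisj : lbs z p ∩ lbs z q = ∅) :
    ∀ r : Finset (Finset α), IsPattern z U r →
      (consistent (insert (Zp ∪ Zq) ((p.erase Zp) ∪ (q.erase Zq))) r ↔
        consistent p (pjoin q r)) :=
  fun _ _ => ⟨consistent_pjoin_of_consistent_punion hp hZp hzp hZq hzq,
    consistent_punion_of_consistent_pjoin hp hq hZp hzp hZq hzq hdisj⟩

end PatternST
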